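/- arXiv:1104.2199 — 2 statements merged into one kernel-verified Lean document; each statement's English description precedes it below -/
import Mathlib

section
/- Let w be a locally integrable weight, Q₀ a dyadic cube with 0 < w(Q₀) < ∞, and let 𝓢(Q₀) be the stopping cubes of Q₀, i.e., 𝓢 = ⋃_{j≥0} 𝓢_j where 𝓢_0 = {Q₀} and 𝓢_{j+1} = ⋃_{S ∈ 𝓢_j} 𝓣(S), with 𝓣(S) the maximal dyadic subcubes S' of S satisfying w(S')/|S'| > 4 w(S)/|S|. Then Σ_{S ∈ 𝓢(Q₀)} w(S) ≤ C_d ‖w‖_{A_∞} w(Q₀), where ‖w‖_{A_∞} = sup_Q w(Q)^{-1} ∫_Q M(w 1_Q) dx and C_d is a dimensional constant. -/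
open MeasureTheory Set
open scoped ENNReal

/-- A dyadic cube in `ℝ^d`, given by a scale `k` and lower-corner integer coordinates `m`. -/
structure DyadicCube (d : ℕ) where
  k : ℤ
  m : Fin d → ℤ

/-- The subset of `ℝ^d` corresponding to a dyadic cube. -/
def DyadicCube.toSet {d : ℕ} (Q : DyadicCube d) : Set (Fin d → ℝ) :=
  Set.univ.pi fun i => Set.Ico ((Q.m i : ℝ) * 2 ^ Q.k) (((Q.m i : ℝ) + 1) * 2 ^ Q.k)

/-- An axis-parallel cube in `ℝ^d` with lower corner `a` and side length `s > 0`. -/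
structure Cube (d : ℕ) where
  a : Fin d → ℝ
  s : ℝ
  s_pos : 0 < s

/-- The subset of `ℝ^d` corresponding to a cube. -/
def Cube.toSet {d : ℕ} (Q : Cube d) : Set (Fin d → ℝ) :=
  Set.univ.pi fun i => Set.Ico (Q.a i) (Q.a i + Q.s)

/-- `u(E) = ∫_E u dx` for a weight `u`, as an extended nonnegative real. -/
noncomputable def wMeas {d : ℕ} (u : (Fin d → ℝ) → ℝ) (E : Set (Fin d → ℝ)) : ℝ≥0∞ :=
  ∫⁻ x in E, ENNReal.ofReal (u x)

/-- The (centered) Hardy–Littlewood maximal function. -/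
noncomputable def maxFn {d : ℕ} (f : (Fin d → ℝ) → ℝ) (x : Fin d → ℝ) : ℝ≥0∞ :=
  ⨆ (t : ℝ) (_ : 0 < t),
    (ENNReal.ofReal ((2 * t) ^ d))⁻¹ *
      ∫⁻ y in Set.univ.pi fun _ : Fin d => Set.Icc (-t) t, ENNReal.ofReal |f (x + y)|

/-- The Fujii–Wilson `A_∞` characteristic `‖w‖_{A_∞} = sup_Q w(Q)⁻¹ ∫_Q M(w 1_Q)`. -/
noncomputable def AinfChar {d : ℕ} (w : (Fin d → ℝ) → ℝ) : ℝ≥0∞ :=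
  ⨆ Q : Cube d, (wMeas w Q.toSet)⁻¹ * ∫⁻ x in Q.toSet, maxFn (Q.toSet.indicator w) x

/-- The average of `w` over `Q'` exceeds 4 times the average over `Q`. -/
noncomputable def BigAvg {d : ℕ} (w : (Fin d → ℝ) → ℝ) (Q' Q : DyadicCube d) : Prop :=
  4 * (wMeas w Q.toSet / volume Q.toSet) < wMeas w Q'.toSet / volume Q'.toSet

/-- `𝓣(S)`: the maximal dyadic subcubes `S' ⊆ S` with `w(S')/|S'| > 4 w(S)/|S|`. -/
def stoppingChildren {d : ℕ} (w : (Fin d → ℝ) → ℝ) (S : DyadicCube d) :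
    Set (DyadicCube d) :=
  {S' : DyadicCube d | S'.toSet ⊆ S.toSet ∧ BigAvg w S' S ∧
    ∀ S'' : DyadicCube d, S'.toSet ⊆ S''.toSet → S''.toSet ⊆ S.toSet →
      BigAvg w S'' S → S''.toSet = S'.toSet}

/-- The `j`-th generation of stopping cubes below `Q₀`. -/
def stoppingGen {d : ℕ} (w : (Fin d → ℝ) → ℝ) (Q₀ : DyadicCube d) :
    ℕ → Set (DyadicCube d)
  | 0 => {Q₀}
  | j + 1 => ⋃ S ∈ stoppingGen w Q₀ j, stoppingChildren w S

/-- The collection `𝓢(Q₀)` of stopping cubes of `Q₀`. -/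
def stoppingCubes {d : ℕ} (w : (Fin d → ℝ) → ℝ) (Q₀ : DyadicCube d) :
    Set (DyadicCube d) :=
  ⋃ j : ℕ, stoppingGen w Q₀ j

/-! For `x ∈ Q₀` the stopping cubes containing `x` form a chain `Q₀ = S₀ ⊋ S₁ ⊋ ⋯ ⊋ S_J` (one per
generation, since cubes of one generation are disjoint) along which the averages `w(S)/|S|` at
least quadruple, while each of them is at most `2ᵈ M(w 1_{Q₀})(x)` because `S` lies in the cube of
side `2 ℓ(S)` centred at `x`. So `∑_S (w(S)/|S|) 1_S(x) ≤ 2 · 2ᵈ M(w 1_{Q₀})(x)`, and integrating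
over `Q₀` gives `∑_S w(S) ≤ 2ᵈ⁺¹ ∫_{Q₀} M(w 1_{Q₀}) ≤ 2ᵈ⁺¹ ‖w‖_{A_∞} w(Q₀)`. -/

lemma Int.floor_div_two_zpow_of_le (r : ℝ) {k k' : ℤ} (hk : k ≤ k') :
    ⌊r / 2 ^ k'⌋ = ⌊r / 2 ^ k⌋ / 2 ^ (k' - k).toNat := by
  have h := Int.floor_div_natCast (r / 2 ^ k) (2 ^ (k' - k).toNat)
  push_cast at h
  rw [← h, div_div, ← zpow_natCast, ← zpow_add₀ two_ne_zero, Int.toNat_of_nonneg (sub_nonneg.2 hk),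
    add_sub_cancel]

namespace DyadicCube

variable {d : ℕ}

instance : Countable (DyadicCube d) :=
  Function.Injective.countable (f := fun Q : DyadicCube d => (Q.k, Q.m))
    fun ⟨_, _⟩ ⟨_, _⟩ h => by simpa using h

lemma measurableSet_toSet (Q : DyadicCube d) : MeasurableSet Q.toSet :=
  MeasurableSet.univ_pi fun _ => measurableSet_Ico

lemma volume_toSet (Q : DyadicCube d) :
    volume Q.toSet = ENNReal.ofReal (((2 : ℝ) ^ Q.k) ^ d) := by
  simp_rw [toSet, volume_pi_pi, Real.volume_Ico]
  simp [add_one_mul, ENNReal.ofReal_pow (by positivity : (0 : ℝ) ≤ 2 ^ Q.k)]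

lemma volume_toSet_ne_zero (Q : DyadicCube d) : volume Q.toSet ≠ 0 := by
  rw [volume_toSet]; positivity

lemma volume_toSet_ne_top (Q : DyadicCube d) : volume Q.toSet ≠ ∞ := by
  rw [volume_toSet]; exact ENNReal.ofReal_ne_top

lemma mem_toSet_iff {Q : DyadicCube d} {x : Fin d → ℝ} :
    x ∈ Q.toSet ↔ ∀ i, ⌊x i / 2 ^ Q.k⌋ = Q.m i := by
  have h2k : (0 : ℝ) < 2 ^ Q.k := by positivity
  simp only [toSet, mem_univ_pi, mem_Ico, Int.floor_eq_iff, le_div_iff₀ h2k, div_lt_iff₀ h2k]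

lemma toSet_subset_of_le {Q Q' : DyadicCube d} (hk : Q.k ≤ Q'.k)
    (h : ¬ Disjoint Q.toSet Q'.toSet) : Q.toSet ⊆ Q'.toSet := by
  obtain ⟨y, hyQ, hyQ'⟩ := not_disjoint_iff.1 h
  intro z hz
  rw [mem_toSet_iff] at hyQ hyQ' hz ⊢
  intro i
  rw [← hyQ' i, Int.floor_div_two_zpow_of_le _ hk, Int.floor_div_two_zpow_of_le _ hk, hz i, hyQ i]

lemma toSet_subset_or_subset_or_disjoint (Q Q' : DyadicCube d) :
    Q.toSet ⊆ Q'.toSet ∨ Q'.toSet ⊆ Q.toSet ∨ Disjoint Q.toSet Q'.toSet := by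
  by_cases h : Disjoint Q.toSet Q'.toSet
  · exact Or.inr (Or.inr h)
  rcases le_total Q.k Q'.k with hk | hk
  · exact Or.inl (toSet_subset_of_le hk h)
  · exact Or.inr (Or.inl (toSet_subset_of_le hk fun h' => h h'.symm))

lemma toSet_injective (hd : d ≠ 0) : Function.Injective (toSet : DyadicCube d → _) := by
  intro Q Q' h
  have hk : Q.k = Q'.k := by
    have hvol := congrArg volume h
    rw [volume_toSet, volume_toSet, ENNReal.ofReal_eq_ofReal_iff (by positivity) (by positivity),
      pow_left_inj₀ (by positivity) (by positivity) hd] at hvol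
    exact zpow_right_injective₀ two_pos (by norm_num) hvol
  have hcorner : (fun i => (Q.m i : ℝ) * 2 ^ Q.k) ∈ Q.toSet := by
    refine mem_toSet_iff.2 fun i => ?_
    rw [mul_div_cancel_right₀ _ (by positivity), Int.floor_intCast]
  have hm : Q.m = Q'.m := funext fun i => by
    have h' := mem_toSet_iff.1 (h ▸ hcorner) i
    rw [← hk] at h'
    exact (mem_toSet_iff.1 hcorner i).symm.trans h'
  cases Q; cases Q'; simp_all

noncomputable def toCube (Q : DyadicCube d) : Cube d :=
  ⟨fun i => Q.m i * 2 ^ Q.k, 2 ^ Q.k, by positivity⟩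

lemma toCube_toSet (Q : DyadicCube d) : Q.toCube.toSet = Q.toSet := by
  simp only [Cube.toSet, toCube, toSet, add_one_mul]

end DyadicCube

lemma Cube.lintegral_maxFn_le_AinfChar_mul {d : ℕ} {w : (Fin d → ℝ) → ℝ} (Q : Cube d)
    (h0 : wMeas w Q.toSet ≠ 0) (htop : wMeas w Q.toSet ≠ ∞) :
    ∫⁻ x in Q.toSet, maxFn (Q.toSet.indicator w) x ≤ AinfChar w * wMeas w Q.toSet := by
  rw [mul_comm, ← ENNReal.inv_mul_le_iff h0 htop]
  exact le_iSup (fun Q : Cube d => (wMeas w Q.toSet)⁻¹ *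
    ∫⁻ x in Q.toSet, maxFn (Q.toSet.indicator w) x) Q

lemma le_maxFn {d : ℕ} (f : (Fin d → ℝ) → ℝ) (x : Fin d → ℝ) {t : ℝ} (ht : 0 < t) :
    (ENNReal.ofReal ((2 * t) ^ d))⁻¹ *
      ∫⁻ y in univ.pi fun _ : Fin d => Icc (-t) t, ENNReal.ofReal |f (x + y)| ≤ maxFn f x :=
  le_iSup₂ (f := fun (t : ℝ) (_ : 0 < t) => (ENNReal.ofReal ((2 * t) ^ d))⁻¹ *
    ∫⁻ y in univ.pi fun _ : Fin d => Icc (-t) t, ENNReal.ofReal |f (x + y)|) t ht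

lemma DyadicCube.setLIntegral_div_volume_le_maxFn {d : ℕ} (f : (Fin d → ℝ) → ℝ)
    {S : DyadicCube d} {x : Fin d → ℝ} (hx : x ∈ S.toSet) :
    (∫⁻ y in S.toSet, ENNReal.ofReal |f y|) / volume S.toSet ≤ 2 ^ d * maxFn f x := by
  set t : ℝ := 2 ^ S.k
  have ht : 0 < t := by positivity
  have hsub : (x + ·) ⁻¹' S.toSet ⊆ univ.pi fun _ : Fin d => Icc (-t) t := by
    intro y hy i _
    have hyi := hy i (mem_univ i)
    have hxi := hx i (mem_univ i)
    simp only [Pi.add_apply, mem_Ico] at hxi hyi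
    constructor <;> linarith [hxi.1, hxi.2, hyi.1, hyi.2]
  have hint : ∫⁻ y in S.toSet, ENNReal.ofReal |f y|
      ≤ ∫⁻ y in univ.pi fun _ : Fin d => Icc (-t) t, ENNReal.ofReal |f (x + y)| := by
    rw [← (measurePreserving_add_left volume x).setLIntegral_comp_preimage_emb
      (measurableEmbedding_addLeft x)]
    exact lintegral_mono_set hsub
  have hvol : ENNReal.ofReal ((2 * t) ^ d) = 2 ^ d * volume S.toSet := by
    rw [S.volume_toSet, mul_pow, ENNReal.ofReal_mul (by positivity), ENNReal.ofReal_pow zero_le_two,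
      ENNReal.ofReal_ofNat]
  have h2d : (2 : ℝ≥0∞) ^ d ≠ 0 := by positivity
  have h2d' : (2 : ℝ≥0∞) ^ d ≠ ∞ := ENNReal.pow_ne_top ENNReal.ofNat_ne_top
  calc (∫⁻ y in S.toSet, ENNReal.ofReal |f y|) / volume S.toSet
      = 2 ^ d * ((ENNReal.ofReal ((2 * t) ^ d))⁻¹ * ∫⁻ y in S.toSet, ENNReal.ofReal |f y|) := by
        rw [hvol, ENNReal.mul_inv (Or.inl h2d) (Or.inl h2d'), ← mul_assoc, ← mul_assoc,
          ENNReal.mul_inv_cancel h2d h2d', one_mul, ENNReal.div_eq_inv_mul]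
    _ ≤ 2 ^ d * maxFn f x := by
        gcongr
        exact le_trans (by gcongr) (le_maxFn f x ht)

section StoppingCubes

variable {d : ℕ} {w : (Fin d → ℝ) → ℝ}

noncomputable def wAvg (w : (Fin d → ℝ) → ℝ) (Q : DyadicCube d) : ℝ≥0∞ :=
  wMeas w Q.toSet / volume Q.toSet

lemma wAvg_le_maxFn {S : DyadicCube d} {E : Set (Fin d → ℝ)} (hSE : S.toSet ⊆ E)
    {x : Fin d → ℝ} (hx : x ∈ S.toSet) : wAvg w S ≤ 2 ^ d * maxFn (E.indicator w) x := by
  refine le_trans ?_ (S.setLIntegral_div_volume_le_maxFn (E.indicator w) hx)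
  refine ENNReal.div_le_div_right (setLIntegral_mono' S.measurableSet_toSet fun y hy => ?_) _
  rw [indicator_of_mem (hSE hy)]
  exact ENNReal.ofReal_le_ofReal (le_abs_self _)

lemma wMeas_eq_setLIntegral_indicator {S : DyadicCube d} {E : Set (Fin d → ℝ)}
    (hSE : S.toSet ⊆ E) :
    wMeas w S.toSet = ∫⁻ x in E, S.toSet.indicator (fun _ => wAvg w S) x := by
  rw [lintegral_indicator S.measurableSet_toSet, setLIntegral_const,
    Measure.restrict_apply S.measurableSet_toSet, inter_eq_left.2 hSE, wAvg,
    ENNReal.div_mul_cancel S.volume_toSet_ne_zero S.volume_toSet_ne_top]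

lemma tsum_le_two_mul_of_doubling {a : ℕ → ℝ≥0∞} {B : ℝ≥0∞} (P : ℕ → Prop)
    (hB : ∀ j, a j ≤ B) (hzero : ∀ j, ¬ P j → a j = 0) (hmono : ∀ j, P (j + 1) → P j)
    (hdouble : ∀ j, P (j + 1) → 2 * a j ≤ a (j + 1)) :
    ∑' j, a j ≤ 2 * B := by
  classical
  have hcap : ∀ n, (if P n then a n else B) ≤ B := fun n => by split_ifs; exacts [hB n, le_rfl]
  have key : ∀ n, ∑ j ∈ Finset.range (n + 1), a j ≤ 2 * if P n then a n else B := by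
    intro n
    induction n with
    | zero => by_cases h : P 0 <;> simp [h, two_mul, hzero]
    | succ n ih =>
      rw [Finset.sum_range_succ]
      by_cases h : P (n + 1)
      · rw [if_pos (hmono n h)] at ih
        calc ∑ j ∈ Finset.range (n + 1), a j + a (n + 1) ≤ 2 * a n + a (n + 1) := by gcongr
          _ ≤ a (n + 1) + a (n + 1) := by gcongr; exact hdouble n h
          _ = 2 * if P (n + 1) then a (n + 1) else B := by rw [if_pos h, two_mul]
      · rw [if_neg h, hzero (n + 1) h, add_zero]
        exact ih.trans (by gcongr; exact hcap n)
  refine ENNReal.tsum_le_of_sum_range_le fun n => ?_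
  cases n with
  | zero => simp
  | succ n => exact (key n).trans (by gcongr; exact hcap n)

variable {Q₀ S S' T : DyadicCube d} {j : ℕ} {x : Fin d → ℝ}

lemma stoppingGen_zero : stoppingGen w Q₀ 0 = {Q₀} := rfl

lemma mem_stoppingGen_succ :
    S ∈ stoppingGen w Q₀ (j + 1) ↔ ∃ T ∈ stoppingGen w Q₀ j, S ∈ stoppingChildren w T := by
  simp [stoppingGen]

lemma toSet_subset_of_mem_stoppingGen (hS : S ∈ stoppingGen w Q₀ j) : S.toSet ⊆ Q₀.toSet := by
  induction j generalizing S with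
  | zero => rw [stoppingGen_zero, mem_singleton_iff] at hS; rw [hS]
  | succ j ih =>
    obtain ⟨T, hT, hST⟩ := mem_stoppingGen_succ.1 hS
    exact hST.1.trans (ih hT)

lemma toSet_ne_of_mem_stoppingChildren (hS : S ∈ stoppingChildren w T) : S.toSet ≠ T.toSet := by
  intro h
  have hbig : 4 * wAvg w T < wAvg w S := hS.2.1
  rw [wAvg, wAvg, h] at hbig
  exact (le_mul_of_one_le_left zero_le (by norm_num)).not_gt hbig

lemma eq_of_mem_stoppingChildren (hS : S ∈ stoppingChildren w T) (hS' : S' ∈ stoppingChildren w T)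
    (hx : x ∈ S.toSet) (hx' : x ∈ S'.toSet) : S = S' := by
  have hset : S.toSet = S'.toSet := by
    rcases S.toSet_subset_or_subset_or_disjoint S' with h | h | h
    · exact (hS.2.2 S' h hS'.1 hS'.2.1).symm
    · exact hS'.2.2 S h hS.1 hS.2.1
    · exact absurd h (not_disjoint_iff.2 ⟨x, hx, hx'⟩)
  rcases eq_or_ne d 0 with rfl | hd
  -- in dimension 0 every nonempty set is the whole space, so there are no stopping children
  · exact (toSet_ne_of_mem_stoppingChildren hS
      ((Nonempty.eq_univ ⟨x, hx⟩).trans (Nonempty.eq_univ ⟨x, hS.1 hx⟩).symm)).elim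
  · exact DyadicCube.toSet_injective hd hset

lemma eq_of_mem_stoppingGen (hS : S ∈ stoppingGen w Q₀ j) (hS' : S' ∈ stoppingGen w Q₀ j)
    (hx : x ∈ S.toSet) (hx' : x ∈ S'.toSet) : S = S' := by
  induction j generalizing S S' with
  | zero => rw [stoppingGen_zero, mem_singleton_iff] at hS hS'; rw [hS, hS']
  | succ j ih =>
    obtain ⟨T, hT, hST⟩ := mem_stoppingGen_succ.1 hS
    obtain ⟨T', hT', hST'⟩ := mem_stoppingGen_succ.1 hS'
    obtain rfl : T = T' := ih hT hT' (hST.1 hx) (hST'.1 hx')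
    exact eq_of_mem_stoppingChildren hST hST' hx hx'

noncomputable def stoppingGenSum (w : (Fin d → ℝ) → ℝ) (Q₀ : DyadicCube d) (j : ℕ)
    (x : Fin d → ℝ) : ℝ≥0∞ :=
  ∑' S : stoppingGen w Q₀ j, (S : DyadicCube d).toSet.indicator (fun _ => wAvg w S) x

lemma stoppingGenSum_eq_wAvg (hS : S ∈ stoppingGen w Q₀ j) (hx : x ∈ S.toSet) :
    stoppingGenSum w Q₀ j x = wAvg w S := by
  rw [stoppingGenSum, tsum_eq_single ⟨S, hS⟩ fun S' hS' => indicator_of_notMem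
    (fun hx' => hS' (Subtype.ext (eq_of_mem_stoppingGen S'.2 hS hx' hx))) _]
  exact indicator_of_mem hx _

lemma stoppingGenSum_eq_zero (h : ¬ ∃ S ∈ stoppingGen w Q₀ j, x ∈ S.toSet) :
    stoppingGenSum w Q₀ j x = 0 :=
  ENNReal.tsum_eq_zero.2 fun S => indicator_of_notMem (fun hx => h ⟨S, S.2, hx⟩) _

lemma measurable_stoppingGenSum (j : ℕ) : Measurable (stoppingGenSum w Q₀ j) :=
  Measurable.tsum fun S => measurable_const.indicator S.1.measurableSet_toSet

lemma tsum_stoppingGenSum_le_maxFn (x : Fin d → ℝ) :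
    ∑' j, stoppingGenSum w Q₀ j x ≤ 2 * (2 ^ d * maxFn (Q₀.toSet.indicator w) x) := by
  refine tsum_le_two_mul_of_doubling (fun j => ∃ S ∈ stoppingGen w Q₀ j, x ∈ S.toSet)
    (fun j => ?_) (fun _ => stoppingGenSum_eq_zero) (fun _ ⟨S, hS, hx⟩ => ?_)
    (fun _ ⟨S, hS, hx⟩ => ?_)
  · by_cases h : ∃ S ∈ stoppingGen w Q₀ j, x ∈ S.toSet
    · obtain ⟨S, hS, hx⟩ := h
      rw [stoppingGenSum_eq_wAvg hS hx]
      exact wAvg_le_maxFn (toSet_subset_of_mem_stoppingGen hS) hx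
    · rw [stoppingGenSum_eq_zero h]; exact zero_le
  · obtain ⟨T, hT, hST⟩ := mem_stoppingGen_succ.1 hS
    exact ⟨T, hT, hST.1 hx⟩
  · obtain ⟨T, hT, hST⟩ := mem_stoppingGen_succ.1 hS
    rw [stoppingGenSum_eq_wAvg hS hx, stoppingGenSum_eq_wAvg hT (hST.1 hx)]
    calc 2 * wAvg w T ≤ 4 * wAvg w T := by gcongr; norm_num
      _ ≤ wAvg w S := hST.2.1.le

lemma tsum_wMeas_stoppingCubes_le_lintegral :
    ∑' S : stoppingCubes w Q₀, wMeas w (S : DyadicCube d).toSet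
      ≤ ∫⁻ x in Q₀.toSet, ∑' j, stoppingGenSum w Q₀ j x := by
  calc ∑' S : stoppingCubes w Q₀, wMeas w (S : DyadicCube d).toSet
      ≤ ∑' j, ∑' S : stoppingGen w Q₀ j, wMeas w (S : DyadicCube d).toSet :=
        ENNReal.tsum_iUnion_le_tsum (fun S : DyadicCube d => wMeas w S.toSet) (stoppingGen w Q₀)
    _ = ∑' j, ∫⁻ x in Q₀.toSet, stoppingGenSum w Q₀ j x := by
        refine tsum_congr fun j => ?_
        simp only [stoppingGenSum]
        rw [lintegral_tsum fun S => (measurable_const.indicator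
          S.1.measurableSet_toSet).aemeasurable]
        exact tsum_congr fun S => wMeas_eq_setLIntegral_indicator
          (toSet_subset_of_mem_stoppingGen S.2)
    _ = ∫⁻ x in Q₀.toSet, ∑' j, stoppingGenSum w Q₀ j x :=
        (lintegral_tsum fun j => (measurable_stoppingGenSum j).aemeasurable).symm

end StoppingCubes

/-- `Σ_{S ∈ 𝓢(Q₀)} w(S) ≤ C_d ‖w‖_{A_∞} w(Q₀)` for a dimensional constant `C_d`. -/
theorem stmt6 (d : ℕ) :
    ∃ C : ℝ, 0 < C ∧
      ∀ (w : (Fin d → ℝ) → ℝ), LocallyIntegrable w volume → (∀ x, 0 ≤ w x) →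
        ∀ Q₀ : DyadicCube d, 0 < wMeas w Q₀.toSet → wMeas w Q₀.toSet < ∞ →
          ∑' S : stoppingCubes w Q₀, wMeas w (S : DyadicCube d).toSet
            ≤ ENNReal.ofReal C * AinfChar w * wMeas w Q₀.toSet := by
  refine ⟨2 ^ (d + 1), by positivity, fun w _ _ Q₀ h0 htop => ?_⟩
  have hAinf := Q₀.toCube.lintegral_maxFn_le_AinfChar_mul (w := w)
  rw [Q₀.toCube_toSet] at hAinf
  calc ∑' S : stoppingCubes w Q₀, wMeas w (S : DyadicCube d).toSet
      ≤ ∫⁻ x in Q₀.toSet, ∑' j, stoppingGenSum w Q₀ j x :=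
        tsum_wMeas_stoppingCubes_le_lintegral
    _ ≤ ∫⁻ x in Q₀.toSet, 2 ^ (d + 1) * maxFn (Q₀.toSet.indicator w) x :=
        lintegral_mono fun x => (tsum_stoppingGenSum_le_maxFn x).trans_eq (by ring)
    _ ≤ 2 ^ (d + 1) * (AinfChar w * wMeas w Q₀.toSet) := by
        rw [lintegral_const_mul' _ _ (ENNReal.pow_ne_top ENNReal.ofNat_ne_top)]
        gcongr
        exact hAinf h0.ne' htop.ne
    _ = ENNReal.ofReal (2 ^ (d + 1)) * AinfChar w * wMeas w Q₀.toSet := by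
        rw [ENNReal.ofReal_pow zero_le_two, ENNReal.ofReal_ofNat, mul_assoc]
end

section
/- Let 𝓢 be a Haar shift of complexity κ with kernel representation 𝓢f = Σ_{Q ∈ 𝓓} |Q|⁻¹ ∫_Q f(y) s_Q(·,y) dy, s_Q supported on Q × Q with ‖s_Q‖_∞ ≤ 1. Let g be an integrable function whose support is disjoint from Q^{(κ)}, the κ-fold dyadic parent of a dyadic cube Q₀. Then 𝓢g is constant on Q₀; in fact every term |R|⁻¹∫ g s_R(x,y) dy with R ∈ 𝓓 that is nonzero for some x ∈ Q₀ is constant in x on Q₀. -/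
/-!
At scales with `Q₀.k ≤ R.k - κ - 1` the kernel `s_R(·, y)` is constant on the dyadic cube of side
`2^{-κ-1}ℓ(R)` containing `Q₀`. At coarser scales, if `x ∈ R` then `R` and `Q₀^{(κ)}` are nested
dyadic cubes with `R` the smaller one, so `g = 0` on `R`; if `x ∉ R` the kernel vanishes by its
support condition. Either way the term does not depend on `x ∈ Q₀`.
-/

open MeasureTheory Set
open scoped ENNReal

/-- The dyadic parent of a dyadic cube. -/
def DyadicCube.parent {d : ℕ} (Q : DyadicCube d) : DyadicCube d :=
  ⟨Q.k + 1, fun i => Int.fdiv (Q.m i) 2⟩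

/-- The `κ`-fold dyadic parent `Q^{(κ)}` of a dyadic cube `Q`. -/
def DyadicCube.parentIter {d : ℕ} (κ : ℕ) (Q : DyadicCube d) : DyadicCube d :=
  DyadicCube.parent^[κ] Q

theorem dyadic_Ico_subset_parent (m k : ℤ) :
    Ico ((m : ℝ) * 2 ^ k) ((m + 1) * 2 ^ k) ⊆
      Ico ((m.fdiv 2 : ℝ) * 2 ^ (k + 1)) ((m.fdiv 2 + 1) * 2 ^ (k + 1)) := by
  have hpos : (0 : ℝ) < 2 ^ k := zpow_pos two_pos k
  have hpow : (2 : ℝ) ^ (k + 1) = 2 * 2 ^ k := by rw [zpow_add_one₀ two_ne_zero]; ring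
  have hm : 2 * m.fdiv 2 ≤ m ∧ m + 1 ≤ 2 * (m.fdiv 2 + 1) := by
    rw [Int.fdiv_eq_ediv_of_nonneg _ zero_le_two]; omega
  have hlow : (2 * m.fdiv 2 : ℝ) ≤ m := by exact_mod_cast hm.1
  have hhigh : (m : ℝ) + 1 ≤ 2 * (m.fdiv 2 + 1) := by exact_mod_cast hm.2
  rw [hpow]
  apply Ico_subset_Ico <;> nlinarith

theorem eq_floor_of_mem_dyadic_Ico {m k : ℤ} {x : ℝ}
    (hx : x ∈ Ico ((m : ℝ) * 2 ^ k) ((m + 1) * 2 ^ k)) : m = ⌊x / 2 ^ k⌋ := by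
  have hpos : (0 : ℝ) < 2 ^ k := zpow_pos two_pos k
  rw [eq_comm, Int.floor_eq_iff, le_div_iff₀ hpos, div_lt_iff₀ hpos]
  exact hx

namespace DyadicCube

variable {d : ℕ}

theorem toSet_subset_parent_toSet (Q : DyadicCube d) : Q.toSet ⊆ Q.parent.toSet :=
  pi_mono fun i _ => dyadic_Ico_subset_parent (Q.m i) Q.k

theorem parentIter_k (n : ℕ) (Q : DyadicCube d) : (parentIter n Q).k = Q.k + n := by
  induction n with
  | zero => simp [parentIter]
  | succ n ih =>
    simp only [parentIter, Function.iterate_succ_apply'] at ih ⊢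
    simp only [parent, ih]
    push_cast
    ring

theorem toSet_subset_parentIter_toSet (n : ℕ) (Q : DyadicCube d) :
    Q.toSet ⊆ (parentIter n Q).toSet := by
  induction n with
  | zero => rfl
  | succ n ih =>
    rw [parentIter, Function.iterate_succ_apply']
    exact ih.trans (toSet_subset_parent_toSet _)

theorem exists_superset_of_k_le (Q : DyadicCube d) {k : ℤ} (hk : Q.k ≤ k) :
    ∃ J : DyadicCube d, J.k = k ∧ Q.toSet ⊆ J.toSet :=
  ⟨parentIter (k - Q.k).toNat Q, by rw [parentIter_k]; omega, toSet_subset_parentIter_toSet _ Q⟩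

theorem eq_of_k_eq_of_mem {Q Q' : DyadicCube d} {x : Fin d → ℝ} (hk : Q.k = Q'.k)
    (hx : x ∈ Q.toSet) (hx' : x ∈ Q'.toSet) : Q = Q' := by
  obtain ⟨k, m⟩ := Q
  obtain ⟨k', m'⟩ := Q'
  obtain rfl : k = k' := hk
  congr 1
  funext i
  exact (eq_floor_of_mem_dyadic_Ico (hx i trivial)).trans
    (eq_floor_of_mem_dyadic_Ico (hx' i trivial)).symm

theorem toSet_subset_of_k_le_of_mem {Q Q' : DyadicCube d} {x : Fin d → ℝ} (hk : Q.k ≤ Q'.k)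
    (hx : x ∈ Q.toSet) (hx' : x ∈ Q'.toSet) : Q.toSet ⊆ Q'.toSet := by
  obtain ⟨J, hJk, hQJ⟩ := Q.exists_superset_of_k_le hk
  rwa [← eq_of_k_eq_of_mem hJk (hQJ hx) hx']

end DyadicCube

open DyadicCube

theorem eq_of_forall_mem_toSet_eq_of_k_le {d : ℕ} {k : ℤ} {K : (Fin d → ℝ) → (Fin d → ℝ) → ℝ}
    (hconst : ∀ J : DyadicCube d, J.k = k →
      ∀ y : Fin d → ℝ, ∀ x ∈ J.toSet, ∀ x' ∈ J.toSet, K x y = K x' y)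
    {Q : DyadicCube d} (hk : Q.k ≤ k) {x x' : Fin d → ℝ}
    (hx : x ∈ Q.toSet) (hx' : x' ∈ Q.toSet) : K x = K x' := by
  obtain ⟨J, hJk, hQJ⟩ := Q.exists_superset_of_k_le hk
  exact funext fun y => hconst J hJk y x (hQJ hx) x' (hQJ hx')

theorem setIntegral_mul_eq_zero_of_k_le_parentIter {d κ : ℕ} {R Q₀ : DyadicCube d}
    {K : (Fin d → ℝ) → (Fin d → ℝ) → ℝ} (hsupp : ∀ x y, x ∉ R.toSet → K x y = 0)
    {g : (Fin d → ℝ) → ℝ} (hdisj : ∀ y ∈ (parentIter κ Q₀).toSet, g y = 0)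
    (hk : R.k ≤ Q₀.k + κ) {x : Fin d → ℝ} (hx : x ∈ Q₀.toSet) :
    ∫ y in R.toSet, g y * K x y = 0 := by
  refine setIntegral_eq_zero_of_forall_eq_zero fun y hy => ?_
  by_cases hxR : x ∈ R.toSet
  · have hR : R.toSet ⊆ (parentIter κ Q₀).toSet :=
      toSet_subset_of_k_le_of_mem (by rw [parentIter_k]; exact hk) hxR
        (toSet_subset_parentIter_toSet κ Q₀ hx)
    rw [hdisj y (hR hy), zero_mul]
  · rw [hsupp x y hxR, mul_zero]

theorem stmt16_general (d κ : ℕ) (s : DyadicCube d → (Fin d → ℝ) → (Fin d → ℝ) → ℝ)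
    (hsupp : ∀ (R : DyadicCube d) (x y), x ∉ R.toSet ∨ y ∉ R.toSet → s R x y = 0)
    (hconst : ∀ R J : DyadicCube d, J.k = R.k - κ - 1 →
      ∀ y : Fin d → ℝ, ∀ x ∈ J.toSet, ∀ x' ∈ J.toSet, s R x y = s R x' y)
    (g : (Fin d → ℝ) → ℝ)
    (Q₀ : DyadicCube d)
    (hdisj : ∀ y ∈ (DyadicCube.parentIter κ Q₀).toSet, g y = 0) :
    ∀ x ∈ Q₀.toSet, ∀ x' ∈ Q₀.toSet,
      (∀ R : DyadicCube d,
        ((volume R.toSet).toReal)⁻¹ * ∫ y in R.toSet, g y * s R x y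
          = ((volume R.toSet).toReal)⁻¹ * ∫ y in R.toSet, g y * s R x' y) ∧
      (∑' R : DyadicCube d, ((volume R.toSet).toReal)⁻¹ * ∫ y in R.toSet, g y * s R x y)
        = ∑' R : DyadicCube d, ((volume R.toSet).toReal)⁻¹ * ∫ y in R.toSet, g y * s R x' y := by
  intro x hx x' hx'
  have hterm : ∀ R : DyadicCube d,
      ((volume R.toSet).toReal)⁻¹ * ∫ y in R.toSet, g y * s R x y
        = ((volume R.toSet).toReal)⁻¹ * ∫ y in R.toSet, g y * s R x' y := by
    intro R
    rcases le_or_gt Q₀.k (R.k - κ - 1) with hfine | hcoarse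
    · rw [eq_of_forall_mem_toSet_eq_of_k_le (hconst R) hfine hx hx']
    · have hsuppR : ∀ x y, x ∉ R.toSet → s R x y = 0 := fun x y hx => hsupp R x y (.inl hx)
      rw [setIntegral_mul_eq_zero_of_k_le_parentIter hsuppR hdisj (by omega) hx,
        setIntegral_mul_eq_zero_of_k_le_parentIter hsuppR hdisj (by omega) hx']
  exact ⟨hterm, tsum_congr hterm⟩

/-- For a Haar shift of complexity `κ` with kernels `s_R` supported on `R × R`, bounded by 1,
and (as for Haar shifts) with `s_R(·,y)` constant on dyadic cubes of side `2^{-κ-1}ℓ(R)`: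
if `g` vanishes on `Q₀^{(κ)}`, then `𝓢g` is constant on `Q₀`, and indeed every term
`|R|⁻¹ ∫ g(y) s_R(·,y) dy` is constant on `Q₀`. -/
theorem stmt16 (d κ : ℕ) (s : DyadicCube d → (Fin d → ℝ) → (Fin d → ℝ) → ℝ)
    (hsupp : ∀ (R : DyadicCube d) (x y), x ∉ R.toSet ∨ y ∉ R.toSet → s R x y = 0)
    (hbdd : ∀ (R : DyadicCube d) (x y), |s R x y| ≤ 1)
    (hconst : ∀ R J : DyadicCube d, J.k = R.k - κ - 1 →
      ∀ y : Fin d → ℝ, ∀ x ∈ J.toSet, ∀ x' ∈ J.toSet, s R x y = s R x' y)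
    (g : (Fin d → ℝ) → ℝ) (hg : Integrable g volume)
    (Q₀ : DyadicCube d)
    (hdisj : ∀ y ∈ (DyadicCube.parentIter κ Q₀).toSet, g y = 0) :
    ∀ x ∈ Q₀.toSet, ∀ x' ∈ Q₀.toSet,
      (∀ R : DyadicCube d,
        ((volume R.toSet).toReal)⁻¹ * ∫ y in R.toSet, g y * s R x y
          = ((volume R.toSet).toReal)⁻¹ * ∫ y in R.toSet, g y * s R x' y) ∧
      (∑' R : DyadicCube d, ((volume R.toSet).toReal)⁻¹ * ∫ y in R.toSet, g y * s R x y)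
        = ∑' R : DyadicCube d, ((volume R.toSet).toReal)⁻¹ * ∫ y in R.toSet, g y * s R x' y :=
  stmt16_general d κ s hsupp hconst g Q₀ hdisj
end
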